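/- Let $\varphi$ be a Schwartz function on $\mathbb{R}$ with $\varphi \geq 0$, and for $j \in \mathbb{Z}$ set $\varphi_j(x) := 2^j\varphi(2^j x)$. For $t \in \mathbb{R}$ define the shifted maximal function $M^t f(x) := \sup_{j \in \mathbb{Z}} (\varphi_j * |f|)(x - 2^{-j}t)$. Then there is an absolute constant $C$ (independent of $t$) such that $\|M^t f\|_{L^{1,\infty}(\mathbb{R})} \leq C\log(2+|t|)\,\|f\|_{L^1(\mathbb{R})}$ for all $f \in L^1(\mathbb{R})$. -/

import Mathlib

/-!
Bound `φ` by dyadic bumps, `φ ≤ ∑ₖ A 4⁻ᵏ 1_{|·| < 2ᵏ}`. With `ν = |f| dx` this gives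
`M^t f ≤ ∑ₖ A 2⁻ᵏ M_{2⁻ᵏ t} ν`, where `M_s ν(x) = supⱼ ν(B(x - s 2ʲ, 2ʲ)) / 2ʲ`, and a
geometrically weighted series of weak-`L¹` functions is weak-`L¹`.

For `M_s`, let `F` be the open set where the Hardy–Littlewood maximal function of `ν` exceeds
`λ / 2`; Vitali gives `λ |F| ≲ ‖ν‖`. A point `x ∉ F` with `M_s ν(x) > λ` sees a ball
`B(y, 2ʲ)`, `y = x - s 2ʲ`, whose closure lies in `F`. If `s ≥ 0` and `b` is the first point of
`Fᶜ` to the right of `y`, with `D` the length of the component of `F` ending at `b`, then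
`2ʲ ≤ D` and `x ∈ [b, b + s 2ʲ] ∩ [b - D + s 2ʲ, b + s 2ʲ]`. Scales with `s 2ʲ ≤ D` put `x` in
`[b, b + D]`, and only `log₂ (2 + s)` further scales remain, each contributing length `D`;
summing over the components of `F` gives `|{M_s ν > λ} \ F| ≲ log (2 + |s|) |F|`.
-/

open MeasureTheory
open scoped ENNReal

/-- `L¹`-normalized dilate `φ_j(x) = 2^j φ(2^j x)`. -/
noncomputable def dilR (j : ℤ) (φ : ℝ → ℝ) : ℝ → ℝ :=
  fun x => (2 : ℝ) ^ j * φ ((2 : ℝ) ^ j * x)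

/-- Shifted maximal function `M^t f(x) = sup_j (φ_j * |f|)(x - 2^{-j} t)`. -/
noncomputable def shiftedMax (φ : ℝ → ℝ) (t : ℝ) (f : ℝ → ℂ) (x : ℝ) : ℝ≥0∞ :=
  ⨆ j : ℤ, ∫⁻ y, ENNReal.ofReal (dilR j φ (x - (2 : ℝ) ^ (-j) * t - y)) * (‖f y‖₊ : ℝ≥0∞)

open Set Metric

theorem isOpen_setOf_lt_measure_ball {X : Type*} [PseudoMetricSpace X] [MeasurableSpace X]
    (μ : Measure X) (r : ℝ) (c : ℝ≥0∞) : IsOpen {x | c < μ (ball x r)} := by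
  refine Metric.isOpen_iff.2 fun x (hx : c < μ (ball x r)) => ?_
  have hball : ball x r = ⋃ n : ℕ, ball x (r - 1 / (n + 1)) := by
    ext z
    simp only [mem_ball, mem_iUnion]
    refine ⟨fun hz => ?_, fun ⟨n, hn⟩ => hn.trans_le (sub_le_self _ (by positivity))⟩
    obtain ⟨n, hn⟩ := exists_nat_one_div_lt (sub_pos.2 hz)
    exact ⟨n, by linarith⟩
  have hmono : Monotone fun n : ℕ => ball x (r - 1 / (n + 1)) := fun m n hmn =>
    ball_subset_ball (sub_le_sub_left (one_div_le_one_div_of_le (by positivity)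
      (by exact_mod_cast Nat.add_le_add_right hmn 1)) r)
  rw [hball, hmono.measure_iUnion, lt_iSup_iff] at hx
  obtain ⟨n, hn⟩ := hx
  refine ⟨1 / (n + 1), by positivity, fun y hy => hn.trans_le (measure_mono ?_)⟩
  exact ball_subset_ball' (by linarith [mem_ball'.1 hy])

theorem ofReal_mul_volume_setOf_lt_measure_ball_le (μ : Measure ℝ) [IsFiniteMeasure μ]
    {lam : ℝ} (hlam : 0 < lam) :
    ENNReal.ofReal lam * volume {x | ∃ r > 0, ENNReal.ofReal (lam * r) < μ (ball x r)}
      ≤ 8 * μ univ := by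
  set F := {x | ∃ r > 0, ENNReal.ofReal (lam * r) < μ (ball x r)}
  choose! r hr_pos hr using fun x (hx : x ∈ F) => hx
  have hr_le : ∀ x ∈ F, r x ≤ (μ univ).toReal / lam := fun x hx => by
    rw [le_div_iff₀ hlam, mul_comm]
    exact ((ENNReal.ofReal_lt_iff_lt_toReal (by nlinarith [hr_pos x hx]) (measure_ne_top μ univ)).1
      ((hr x hx).trans_le (measure_mono (subset_univ _)))).le
  obtain ⟨u, huF, hu_disj, hu_cover⟩ :=
    Vitali.exists_disjoint_subfamily_covering_enlargement_closedBall F id r _ hr_le 4 (by norm_num)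
  have hu_disj' : u.PairwiseDisjoint fun b => ball b (r b) :=
    hu_disj.mono fun b => ball_subset_closedBall
  have hu_count : u.Countable := hu_disj'.countable_of_isOpen (fun _ _ => isOpen_ball)
    fun b hb => nonempty_ball.2 (hr_pos b (huF hb))
  have hF_cover : F ⊆ ⋃ b ∈ u, closedBall b (4 * r b) := fun x hx => by
    obtain ⟨b, hbu, hsub⟩ := hu_cover x hx
    exact mem_biUnion hbu (hsub (mem_closedBall_self (hr_pos x hx).le))
  calc ENNReal.ofReal lam * volume F
      ≤ ENNReal.ofReal lam * ∑' b : u, volume (closedBall (b : ℝ) (4 * r b)) :=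
        mul_le_mul_right ((measure_mono hF_cover).trans (measure_biUnion_le _ hu_count _)) _
    _ = ∑' b : u, 8 * ENNReal.ofReal (lam * r b) := by
        rw [← ENNReal.tsum_mul_left]
        refine tsum_congr fun b => ?_
        rw [Real.volume_closedBall, ← ENNReal.ofReal_mul hlam.le, ← ENNReal.ofReal_ofNat 8,
          ← ENNReal.ofReal_mul (by norm_num)]
        ring_nf
    _ ≤ ∑' b : u, 8 * μ (ball (b : ℝ) (r b)) :=
        ENNReal.tsum_le_tsum fun b => mul_le_mul_right (hr b (huF b.2)).le _
    _ ≤ 8 * μ univ := by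
        rw [ENNReal.tsum_mul_left,
          ← measure_biUnion hu_count hu_disj' fun _ _ => measurableSet_ball]
        exact mul_le_mul_right (measure_mono (subset_univ _)) _

theorem IsOpen.exists_mem_Icc_notMem_Ico_subset {F : Set ℝ} (hF : IsOpen F) {y x : ℝ}
    (hyx : y ≤ x) (hx : x ∉ F) : ∃ b ∈ Icc y x, b ∉ F ∧ Ico y b ⊆ F := by
  have hA : IsClosed (Icc y x ∩ Fᶜ) := isClosed_Icc.inter hF.isClosed_compl
  have hbdd : BddBelow (Icc y x ∩ Fᶜ) := bddBelow_Icc.mono inter_subset_left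
  obtain ⟨hb, hbF⟩ := hA.csInf_mem ⟨x, ⟨hyx, le_rfl⟩, hx⟩ hbdd
  refine ⟨_, hb, hbF, fun z hz => ?_⟩
  by_contra hzF
  exact (csInf_le hbdd ⟨⟨hz.1, hz.2.le.trans hb.2⟩, hzF⟩).not_gt hz.2

/-- For `b ∉ F` this is the length of the component of `F` ending at `b`; it is `0` when the
set of admissible `ε` is unbounded. -/
noncomputable def leftDepth (F : Set ℝ) (b : ℝ) : ℝ :=
  sSup {ε | Ioo (b - ε) b ⊆ F}

theorem Ioo_sub_leftDepth_subset (F : Set ℝ) (b : ℝ) : Ioo (b - leftDepth F b) b ⊆ F := by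
  by_cases hbdd : BddAbove {ε | Ioo (b - ε) b ⊆ F}
  · intro z hz
    obtain ⟨ε, hε, hzε⟩ := exists_lt_of_lt_csSup ⟨0, by simp⟩ (by linarith [hz.1] :
      b - z < leftDepth F b)
    exact hε ⟨by linarith, hz.2⟩
  · simp [leftDepth, Real.sSup_of_not_bddAbove hbdd]

theorem le_leftDepth {F : Set ℝ} (hF : volume F ≠ ⊤) {b ε : ℝ} (h : Ioo (b - ε) b ⊆ F) :
    ε ≤ leftDepth F b := by
  refine le_csSup ⟨max 0 (volume F).toReal, fun δ (hδ : Ioo (b - δ) b ⊆ F) => ?_⟩ h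
  have := measure_mono (μ := volume) hδ
  rw [Real.volume_Ioo, sub_sub_cancel, ENNReal.ofReal_le_iff_le_toReal hF] at this
  exact this.trans (le_max_right _ _)

theorem pairwiseDisjoint_Ioo_leftDepth (F : Set ℝ) :
    Fᶜ.PairwiseDisjoint fun b => Ioo (b - leftDepth F b) b := by
  have key : ∀ b b', b ∉ F → b < b' →
      Disjoint (Ioo (b - leftDepth F b) b) (Ioo (b' - leftDepth F b') b') := fun b b' hb hbb' => by
    have : b' - leftDepth F b' ≥ b := by
      by_contra! h
      exact hb (Ioo_sub_leftDepth_subset F b' ⟨h, hbb'⟩)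
    exact Set.disjoint_left.2 fun z hz hz' => by linarith [hz.2, hz'.1]
  intro b hb b' hb' hne
  rcases hne.lt_or_gt with h | h
  · exact key b b' hb h
  · exact (key b' b hb' h).symm

theorem volume_iUnion_Icc_inter_Icc_le (b D s : ℝ) {K : ℕ} (hsK : s ≤ 2 ^ K) :
    volume (⋃ (j : ℤ) (_ : (2 : ℝ) ^ j ≤ D),
        Icc b (b + s * 2 ^ j) ∩ Icc (b - D + s * 2 ^ j) (b + s * 2 ^ j))
      ≤ (K + 1) * ENNReal.ofReal D := by
  rcases le_or_gt D 0 with hD | hD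
  · simp [fun j : ℤ => (hD.trans_lt (zpow_pos two_pos j)).not_ge]
  set M := Int.log 2 D
  -- scales with `s * 2 ^ j ≤ D` stay in `[b, b + D]`; the others satisfy `M - K < j ≤ M`
  have hcover : (⋃ (j : ℤ) (_ : (2 : ℝ) ^ j ≤ D),
      Icc b (b + s * 2 ^ j) ∩ Icc (b - D + s * 2 ^ j) (b + s * 2 ^ j)) ⊆
      Icc b (b + D) ∪ ⋃ j ∈ Finset.Ioc (M - K) M, Icc (b - D + s * 2 ^ j) (b + s * 2 ^ j) := by
    simp only [iUnion_subset_iff]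
    intro j hj x ⟨hx₁, hx₂⟩
    by_cases hsj : s * 2 ^ j ≤ D
    · exact Or.inl ⟨hx₁.1, by linarith [hx₁.2]⟩
    · refine Or.inr (mem_biUnion (Finset.mem_Ioc.2 ⟨?_, ?_⟩) hx₂)
      · have : D < (2 : ℝ) ^ (j + K) := by
          rw [zpow_add₀ two_ne_zero, zpow_natCast]
          nlinarith [zpow_pos (two_pos (α := ℝ)) j]
        have := (Int.lt_zpow_iff_log_lt (R := ℝ) one_lt_two hD).1 (by exact_mod_cast this)
        omega
      · exact (Int.zpow_le_iff_le_log (R := ℝ) one_lt_two hD).1 (by exact_mod_cast hj)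
  calc _ ≤ volume (Icc b (b + D)) +
        ∑ j ∈ Finset.Ioc (M - K) M, volume (Icc (b - D + s * 2 ^ j) (b + s * 2 ^ j)) :=
        (measure_mono hcover).trans
          ((measure_union_le _ _).trans (add_le_add_right (measure_biUnion_finset_le _ _) _))
    _ = (K + 1) * ENNReal.ofReal D := by
        simp only [Real.volume_Icc, add_sub_cancel_left, sub_add_eq_sub_sub, add_sub_sub_cancel,
          Finset.sum_const, Int.card_Ioc, sub_sub_cancel, Int.toNat_natCast, nsmul_eq_mul]
        ring

def escapeSet (F : Set ℝ) (s : ℝ) : Set ℝ :=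
  {x | x ∉ F ∧ ∃ j : ℤ, closedBall (x - s * 2 ^ j) (2 ^ j) ⊆ F}

theorem escapeSet_subset_iUnion {F : Set ℝ} (hF : IsOpen F) (hFvol : volume F ≠ ⊤) {s : ℝ}
    (hs : 0 ≤ s) :
    escapeSet F s ⊆ ⋃ b ∈ {b | b ∉ F ∧ 0 < leftDepth F b},
      ⋃ (j : ℤ) (_ : (2 : ℝ) ^ j ≤ leftDepth F b),
        Icc b (b + s * 2 ^ j) ∩ Icc (b - leftDepth F b + s * 2 ^ j) (b + s * 2 ^ j) := by
  rintro x ⟨hxF, j, hball⟩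
  set y := x - s * 2 ^ j
  have hj : (0 : ℝ) < 2 ^ j := zpow_pos two_pos j
  rw [Real.closedBall_eq_Icc] at hball
  obtain ⟨b, ⟨hyb, hbx⟩, hbF, hyb_sub⟩ :=
    hF.exists_mem_Icc_notMem_Ico_subset (by nlinarith : y ≤ x) hxF
  have hjb : y + 2 ^ j < b := by
    by_contra! h
    exact hbF (hball ⟨by linarith, h⟩)
  have hdepth : b - y ≤ leftDepth F b :=
    le_leftDepth hFvol fun z hz => hyb_sub ⟨by linarith [hz.1], hz.2⟩
  refine mem_biUnion ⟨hbF, by linarith⟩ (mem_iUnion₂.2 ⟨j, by linarith, ?_, ?_⟩)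
  · exact ⟨hbx, by linarith⟩
  · exact ⟨by linarith, by linarith⟩

theorem volume_escapeSet_le_of_nonneg {F : Set ℝ} (hF : IsOpen F) (hFvol : volume F ≠ ⊤)
    {s : ℝ} {K : ℕ} (hs : 0 ≤ s) (hsK : s ≤ 2 ^ K) :
    volume (escapeSet F s) ≤ (K + 1) * volume F := by
  set B := {b | b ∉ F ∧ 0 < leftDepth F b}
  have hdisj : B.PairwiseDisjoint fun b => Ioo (b - leftDepth F b) b :=
    (pairwiseDisjoint_Ioo_leftDepth F).subset fun _ hb => hb.1
  have hB : B.Countable := hdisj.countable_of_isOpen (fun _ _ => isOpen_Ioo)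
    fun b hb => nonempty_Ioo.2 (by linarith [hb.2])
  calc volume (escapeSet F s)
      ≤ ∑' b : B, volume (⋃ (j : ℤ) (_ : (2 : ℝ) ^ j ≤ leftDepth F b), Icc (b : ℝ) (b + s * 2 ^ j) ∩
          Icc (b - leftDepth F b + s * 2 ^ j) (b + s * 2 ^ j)) :=
        (measure_mono (escapeSet_subset_iUnion hF hFvol hs)).trans (measure_biUnion_le _ hB _)
    _ ≤ ∑' b : B, (K + 1) * volume (Ioo ((b : ℝ) - leftDepth F b) b) := by
        gcongr with b
        rw [Real.volume_Ioo, sub_sub_cancel]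
        exact volume_iUnion_Icc_inter_Icc_le _ _ _ hsK
    _ = (K + 1) * volume (⋃ b ∈ B, Ioo (b - leftDepth F b) b) := by
        rw [ENNReal.tsum_mul_left, measure_biUnion hB hdisj fun _ _ => measurableSet_Ioo]
    _ ≤ (K + 1) * volume F := by
        gcongr
        exact iUnion₂_subset fun b _ => Ioo_sub_leftDepth_subset F b

theorem neg_escapeSet (F : Set ℝ) (s : ℝ) : -escapeSet F s = escapeSet (-F) (-s) := by
  ext x
  simp only [escapeSet, mem_neg, mem_ofPred_eq, ← Set.neg_subset, neg_closedBall]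
  ring_nf

theorem volume_escapeSet_le {F : Set ℝ} (hF : IsOpen F) (hFvol : volume F ≠ ⊤)
    {s : ℝ} {K : ℕ} (hsK : |s| ≤ 2 ^ K) :
    volume (escapeSet F s) ≤ (K + 1) * volume F := by
  rcases le_or_gt 0 s with hs | hs
  · exact volume_escapeSet_le_of_nonneg hF hFvol hs ((le_abs_self s).trans hsK)
  · rw [← Measure.measure_neg, neg_escapeSet, ← Measure.measure_neg (μ := volume) F]
    exact volume_escapeSet_le_of_nonneg hF.neg (by rwa [Measure.measure_neg]) (by linarith)
      ((neg_le_abs s).trans hsK)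

noncomputable def shiftedDyadicMaximal (μ : Measure ℝ) (s x : ℝ) : ℝ≥0∞ :=
  ⨆ j : ℤ, μ (ball (x - s * 2 ^ j) (2 ^ j)) / ENNReal.ofReal (2 ^ j)

theorem measure_ball_le_ofReal_mul_shiftedDyadicMaximal (μ : Measure ℝ) (s x : ℝ) (j : ℤ) :
    μ (ball (x - s * 2 ^ j) (2 ^ j)) ≤ ENNReal.ofReal (2 ^ j) * shiftedDyadicMaximal μ s x := by
  have h0 : ENNReal.ofReal (2 ^ j) ≠ 0 := (ENNReal.ofReal_pos.2 (by positivity)).ne'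
  rw [mul_comm (ENNReal.ofReal _)]
  exact (ENNReal.div_le_iff h0 ENNReal.ofReal_ne_top).1
    (le_iSup (fun j : ℤ => μ (ball (x - s * 2 ^ j) (2 ^ j)) / ENNReal.ofReal (2 ^ j)) j)

theorem exists_lt_measure_ball_of_lt_shiftedDyadicMaximal {μ : Measure ℝ} {s x lam : ℝ}
    (hlam : 0 ≤ lam) (h : ENNReal.ofReal lam < shiftedDyadicMaximal μ s x) :
    ∃ j : ℤ, ENNReal.ofReal (lam * 2 ^ j) < μ (ball (x - s * 2 ^ j) (2 ^ j)) := by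
  obtain ⟨j, hj⟩ := lt_iSup_iff.1 h
  have h0 : ENNReal.ofReal (2 ^ j) ≠ 0 := (ENNReal.ofReal_pos.2 (by positivity)).ne'
  rw [ENNReal.lt_div_iff_mul_lt (Or.inl h0) (Or.inl ENNReal.ofReal_ne_top),
    ← ENNReal.ofReal_mul hlam] at hj
  exact ⟨j, hj⟩

theorem setOf_lt_shiftedDyadicMaximal_subset (μ : Measure ℝ) (s : ℝ) {lam : ℝ} (hlam : 0 ≤ lam) :
    {x | ENNReal.ofReal lam < shiftedDyadicMaximal μ s x} ⊆
      {x | ∃ r > 0, ENNReal.ofReal (lam / 2 * r) < μ (ball x r)} ∪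
        escapeSet {x | ∃ r > 0, ENNReal.ofReal (lam / 2 * r) < μ (ball x r)} s := by
  intro x hx
  obtain ⟨j, hj⟩ := exists_lt_measure_ball_of_lt_shiftedDyadicMaximal hlam hx
  refine or_iff_not_imp_left.2 fun hxF =>
    ⟨hxF, j, fun y hy => ⟨2 ^ (j + 1), zpow_pos two_pos _, ?_⟩⟩
  -- `ball (x - s * 2 ^ j) (2 ^ j) ⊆ ball y (2 ^ (j + 1))` for every `y` in the closed ball
  rw [zpow_add₀ two_ne_zero, zpow_one]
  refine lt_of_eq_of_lt (by ring_nf) (hj.trans_le (measure_mono (ball_subset_ball' ?_)))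
  linarith [mem_closedBall'.1 hy]

theorem ofReal_mul_volume_lt_shiftedDyadicMaximal_le (μ : Measure ℝ) [IsFiniteMeasure μ]
    {s lam : ℝ} {K : ℕ} (hsK : |s| ≤ 2 ^ K) (hlam : 0 < lam) :
    ENNReal.ofReal lam * volume {x | ENNReal.ofReal lam < shiftedDyadicMaximal μ s x}
      ≤ 16 * (K + 2) * μ univ := by
  set F := {x | ∃ r > 0, ENNReal.ofReal (lam / 2 * r) < μ (ball x r)}
  have hF_open : IsOpen F := isOpen_iff_forall_mem_open.2 fun x ⟨r, hr, hx⟩ =>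
    ⟨_, fun y hy => ⟨r, hr, hy⟩, isOpen_setOf_lt_measure_ball μ r _, hx⟩
  have hF_weak : ENNReal.ofReal lam * volume F ≤ 16 * μ univ := by
    rw [show lam = 2 * (lam / 2) by ring, ENNReal.ofReal_mul zero_le_two, ENNReal.ofReal_ofNat,
      mul_assoc, show (16 : ℝ≥0∞) = 2 * 8 by norm_num, mul_assoc]
    exact mul_le_mul_right (ofReal_mul_volume_setOf_lt_measure_ball_le μ (half_pos hlam)) 2
  have hF_fin : volume F ≠ ⊤ := (ENNReal.lt_top_of_mul_ne_top_right
    (ne_top_of_le_ne_top (by finiteness) hF_weak) (ENNReal.ofReal_pos.2 hlam).ne').ne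
  calc ENNReal.ofReal lam * volume {x | ENNReal.ofReal lam < shiftedDyadicMaximal μ s x}
      ≤ ENNReal.ofReal lam * (volume F + (K + 1) * volume F) := by
        gcongr
        refine (measure_mono (setOf_lt_shiftedDyadicMaximal_subset μ s hlam.le)).trans
          ((measure_union_le _ _).trans (add_le_add_right ?_ _))
        exact volume_escapeSet_le hF_open hF_fin hsK
    _ = (K + 2) * (ENNReal.ofReal lam * volume F) := by ring
    _ ≤ 16 * (K + 2) * μ univ := by
        rw [mul_comm 16, mul_assoc]
        gcongr

theorem tsum_ofReal_mul_geometric {c r : ℝ} (hc : 0 ≤ c) (hr₀ : 0 ≤ r) (hr₁ : r < 1) :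
    ∑' k : ℕ, ENNReal.ofReal (c * r ^ k) = ENNReal.ofReal (c * (1 - r)⁻¹) := by
  rw [← ENNReal.ofReal_tsum_of_nonneg (fun k => by positivity)
    ((summable_geometric_of_lt_one hr₀ hr₁).mul_left c), tsum_mul_left,
    tsum_geometric_of_lt_one hr₀ hr₁]

theorem ofReal_mul_measure_lt_tsum_le {α : Type*} [MeasurableSpace α] (μ : Measure α)
    (g : ℕ → α → ℝ≥0∞) {A : ℝ} (hA : 0 < A) {B : ℝ≥0∞}
    (hg : ∀ k (lam : ℝ), 0 < lam → ENNReal.ofReal lam * μ {x | ENNReal.ofReal lam < g k x} ≤ B)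
    {l : ℝ} (hl : 0 < l) :
    ENNReal.ofReal l * μ {x | ENNReal.ofReal l < ∑' k, ENNReal.ofReal (A * 2⁻¹ ^ k) * g k x}
      ≤ ENNReal.ofReal (12 * A) * B := by
  set lam : ℕ → ℝ := fun k => l * (3 / 2) ^ k / (4 * A)
  have hlam : ∀ k, 0 < lam k := fun k => by positivity
  have hweight : ∀ k, A * 2⁻¹ ^ k * lam k = l / 4 * (3 / 4) ^ k := fun k => by
    rw [show (3 / 4 : ℝ) ^ k = (3 / 2) ^ k * 2⁻¹ ^ k by rw [← mul_pow]; norm_num]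
    simp only [lam]
    field_simp
  have hscale : ∀ k, 4 * A * (2 / 3) ^ k * lam k = l := fun k => by
    simp only [lam]
    field_simp
    rw [← mul_pow]
    norm_num
  have hsum : ∑' k, ENNReal.ofReal (A * 2⁻¹ ^ k) * ENNReal.ofReal (lam k) = ENNReal.ofReal l := by
    simp_rw [← ENNReal.ofReal_mul (by positivity : (0 : ℝ) ≤ A * 2⁻¹ ^ _), hweight]
    rw [tsum_ofReal_mul_geometric (by positivity) (by norm_num) (by norm_num)]
    norm_num
  have hsub : {x | ENNReal.ofReal l < ∑' k, ENNReal.ofReal (A * 2⁻¹ ^ k) * g k x} ⊆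
      ⋃ k, {x | ENNReal.ofReal (lam k) < g k x} := fun x hx => by
    by_contra! h
    simp only [mem_iUnion, mem_ofPred_eq, not_exists, not_lt] at h
    exact (hsum ▸ hx).not_ge (ENNReal.tsum_le_tsum fun k => mul_le_mul_right (h k) _)
  calc ENNReal.ofReal l * μ {x | ENNReal.ofReal l < ∑' k, ENNReal.ofReal (A * 2⁻¹ ^ k) * g k x}
      ≤ ENNReal.ofReal l * ∑' k, μ {x | ENNReal.ofReal (lam k) < g k x} :=
        mul_le_mul_right ((measure_mono hsub).trans (measure_iUnion_le _)) _
    _ = ∑' k, ENNReal.ofReal (4 * A * (2 / 3) ^ k) *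
          (ENNReal.ofReal (lam k) * μ {x | ENNReal.ofReal (lam k) < g k x}) := by
        rw [← ENNReal.tsum_mul_left]
        refine tsum_congr fun k => ?_
        rw [← mul_assoc, ← ENNReal.ofReal_mul (by positivity), hscale]
    _ ≤ ∑' k, ENNReal.ofReal (4 * A * (2 / 3) ^ k) * B :=
        ENNReal.tsum_le_tsum fun k => mul_le_mul_right (hg k _ (hlam k)) _
    _ = ENNReal.ofReal (12 * A) * B := by
        rw [ENNReal.tsum_mul_right, tsum_ofReal_mul_geometric (by positivity) (by norm_num)
          (by norm_num), show 4 * A * (1 - 2 / 3 : ℝ)⁻¹ = 12 * A by ring]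

theorem SchwartzMap.exists_le_div_four_pow (φ : SchwartzMap ℝ ℝ) :
    ∃ A > 0, ∀ v, ∃ k : ℕ, |v| < 2 ^ k ∧ φ v ≤ A / 4 ^ k := by
  set S := ((Finset.Iic (2, 0)).sup fun m => SchwartzMap.seminorm ℝ m.1 m.2) φ
  have hS : 0 ≤ S := apply_nonneg _ φ
  have hdecay : ∀ v, (1 + |v|) ^ 2 * |φ v| ≤ 2 ^ 2 * S := fun v => by
    simpa [norm_iteratedFDeriv_zero] using
      SchwartzMap.one_add_le_sup_seminorm_apply (𝕜 := ℝ) (m := (2, 0)) le_rfl le_rfl φ v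
  refine ⟨16 * S + 1, by positivity, fun v => ?_⟩
  obtain ⟨n, hn, hn'⟩ := exists_nat_pow_near (by linarith [abs_nonneg v] : 1 ≤ 1 + |v|) one_lt_two
  refine ⟨n + 1, by linarith, ?_⟩
  -- `4 ^ (n + 1) ≤ 4 (1 + |v|) ^ 2` since `2 ^ n ≤ 1 + |v|`
  rw [le_div_iff₀ (by positivity), pow_succ, show (4 : ℝ) ^ n = (2 ^ n) ^ 2 by
    rw [← pow_mul, pow_mul']; norm_num]
  nlinarith [hdecay v, le_abs_self (φ v), abs_nonneg (φ v), pow_le_pow_left₀ (by positivity) hn 2]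

theorem lintegral_dilR_le {φ : ℝ → ℝ} {A : ℝ} (hφ : ∀ v, ∃ k : ℕ, |v| < 2 ^ k ∧ φ v ≤ A / 4 ^ k)
    (ν : Measure ℝ) (j : ℤ) (c : ℝ) :
    ∫⁻ y, ENNReal.ofReal (dilR j φ (c - y)) ∂ν
      ≤ ∑' k : ℕ, ENNReal.ofReal (2 ^ j * (A / 4 ^ k)) * ν (ball c (2 ^ ((k : ℤ) - j))) := by
  have hj : (0 : ℝ) < 2 ^ j := by positivity
  calc ∫⁻ y, ENNReal.ofReal (dilR j φ (c - y)) ∂ν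
      ≤ ∫⁻ y, ∑' k : ℕ, (ball c (2 ^ ((k : ℤ) - j))).indicator
          (fun _ => ENNReal.ofReal (2 ^ j * (A / 4 ^ k))) y ∂ν := by
        refine lintegral_mono fun y => ?_
        obtain ⟨k, hk, hφk⟩ := hφ (2 ^ j * (c - y))
        refine le_trans ?_ (ENNReal.le_tsum k)
        rw [indicator_of_mem]
        · exact ENNReal.ofReal_le_ofReal (mul_le_mul_of_nonneg_left hφk hj.le)
        · rw [mem_ball, Real.dist_eq, abs_sub_comm, zpow_sub₀ two_ne_zero, zpow_natCast,
            lt_div_iff₀ hj]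
          rwa [abs_mul, abs_of_pos hj, mul_comm] at hk
    _ = _ := by
        rw [lintegral_tsum fun k => (measurable_const.indicator measurableSet_ball).aemeasurable]
        simp_rw [lintegral_indicator_const measurableSet_ball]

theorem shiftedMax_le_tsum {φ : ℝ → ℝ} {A : ℝ} (hφ : ∀ v, ∃ k : ℕ, |v| < 2 ^ k ∧ φ v ≤ A / 4 ^ k)
    {f : ℝ → ℂ} (hf : AEMeasurable fun y => (‖f y‖₊ : ℝ≥0∞)) (t x : ℝ) :
    shiftedMax φ t f x ≤ ∑' k : ℕ, ENNReal.ofReal (A * 2⁻¹ ^ k) *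
      shiftedDyadicMaximal (volume.withDensity fun y => (‖f y‖₊ : ℝ≥0∞)) (2⁻¹ ^ k * t) x := by
  refine iSup_le fun j => ?_
  set ν := volume.withDensity fun y => (‖f y‖₊ : ℝ≥0∞)
  rw [show (∫⁻ y, ENNReal.ofReal (dilR j φ (x - 2 ^ (-j) * t - y)) * ‖f y‖₊) =
      ∫⁻ y, ENNReal.ofReal (dilR j φ (x - 2 ^ (-j) * t - y)) ∂ν by
    rw [lintegral_withDensity_eq_lintegral_mul_non_measurable₀ _ hf
      (Filter.Eventually.of_forall fun _ => ENNReal.coe_lt_top)]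
    simp only [Pi.mul_apply, mul_comm]]
  refine (lintegral_dilR_le hφ ν j _).trans (ENNReal.tsum_le_tsum fun k => ?_)
  have hcentre : x - 2 ^ (-j) * t = x - 2⁻¹ ^ k * t * 2 ^ ((k : ℤ) - j) := by
    rw [zpow_sub₀ two_ne_zero, zpow_neg, zpow_natCast, inv_pow]
    field_simp
  have hweight : 2 ^ j * (A / 4 ^ k) * 2 ^ ((k : ℤ) - j) = A * 2⁻¹ ^ k := by
    rw [zpow_sub₀ two_ne_zero, zpow_natCast, inv_pow, show (4 : ℝ) ^ k = 2 ^ k * 2 ^ k by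
      rw [← mul_pow]; norm_num]
    field_simp
  calc ENNReal.ofReal (2 ^ j * (A / 4 ^ k)) * ν (ball (x - 2 ^ (-j) * t) (2 ^ ((k : ℤ) - j)))
      ≤ ENNReal.ofReal (2 ^ j * (A / 4 ^ k)) * (ENNReal.ofReal (2 ^ ((k : ℤ) - j)) *
          shiftedDyadicMaximal ν (2⁻¹ ^ k * t) x) := by
        rw [hcentre]
        exact mul_le_mul_right (measure_ball_le_ofReal_mul_shiftedDyadicMaximal ν _ x _) _
    _ = ENNReal.ofReal (A * 2⁻¹ ^ k) * shiftedDyadicMaximal ν (2⁻¹ ^ k * t) x := by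
        rw [← mul_assoc, ← ENNReal.ofReal_mul' (by positivity), hweight]

theorem exists_le_two_pow_and_log_le {s : ℝ} (hs : 0 ≤ s) :
    ∃ K : ℕ, s ≤ 2 ^ K ∧ ((K : ℝ) + 2) * Real.log 2 ≤ 3 * Real.log (2 + s) := by
  obtain ⟨n, hn, hn'⟩ := exists_nat_pow_near (by linarith : (1 : ℝ) ≤ 1 + s) one_lt_two
  refine ⟨n + 1, by linarith, ?_⟩
  rw [show ((n + 1 : ℕ) : ℝ) + 2 = ((n + 3 : ℕ) : ℝ) by push_cast; ring, ← Real.log_pow,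
    show (3 : ℝ) = ((3 : ℕ) : ℝ) by norm_num, ← Real.log_pow]
  refine Real.log_le_log (by positivity) ?_
  rw [pow_add]
  nlinarith [pow_pos (by positivity : (0 : ℝ) < 2 + s) 2, sq_nonneg s]

theorem shiftedMax_weak_l1_general (φ : SchwartzMap ℝ ℝ) :
    ∃ C > (0 : ℝ), ∀ t : ℝ, ∀ f : ℝ → ℂ, Integrable f volume →
      ∀ l : ℝ, 0 < l →
        ENNReal.ofReal l * volume {x : ℝ | ENNReal.ofReal l < shiftedMax (⇑φ) t f x}
          ≤ ENNReal.ofReal (C * Real.log (2 + |t|)) * ∫⁻ y, (‖f y‖₊ : ℝ≥0∞) := by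
  obtain ⟨A, hA, hφ⟩ := φ.exists_le_div_four_pow
  have hlog2 : 0 < Real.log 2 := Real.log_pos one_lt_two
  refine ⟨576 * A / Real.log 2, by positivity, fun t f hf l hl => ?_⟩
  obtain ⟨K, htK, hK⟩ := exists_le_two_pow_and_log_le (abs_nonneg t)
  set ν := volume.withDensity fun y => (‖f y‖₊ : ℝ≥0∞)
  have hν : ν univ = ∫⁻ y, ‖f y‖₊ := by simp [ν]
  have : IsFiniteMeasure ν := ⟨hν ▸ hf.2⟩
  have hsK : ∀ k : ℕ, |2⁻¹ ^ k * t| ≤ 2 ^ K := fun k => by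
    rw [abs_mul, abs_of_pos (by positivity)]
    exact (mul_le_of_le_one_left (abs_nonneg t) (pow_le_one₀ (by norm_num) (by norm_num))).trans htK
  calc ENNReal.ofReal l * volume {x : ℝ | ENNReal.ofReal l < shiftedMax (⇑φ) t f x}
      ≤ ENNReal.ofReal l * volume {x | ENNReal.ofReal l <
          ∑' k : ℕ, ENNReal.ofReal (A * 2⁻¹ ^ k) * shiftedDyadicMaximal ν (2⁻¹ ^ k * t) x} :=
        mul_le_mul_right (measure_mono fun x hx =>
          hx.trans_le (shiftedMax_le_tsum hφ hf.1.aemeasurable.nnnorm.coe_nnreal_ennreal t x)) _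
    _ ≤ ENNReal.ofReal (12 * A) * (16 * (K + 2) * ν univ) :=
        ofReal_mul_measure_lt_tsum_le volume _ hA
          (fun k _ hlam => ofReal_mul_volume_lt_shiftedDyadicMaximal_le ν (hsK k) hlam) hl
    _ ≤ ENNReal.ofReal (576 * A / Real.log 2 * Real.log (2 + |t|)) * ∫⁻ y, (‖f y‖₊ : ℝ≥0∞) := by
        rw [← hν, ← mul_assoc, show (16 * (K + 2) : ℝ≥0∞) = ENNReal.ofReal (16 * (K + 2)) by
          norm_cast, ← ENNReal.ofReal_mul (by positivity)]
        refine mul_le_mul_left (ENNReal.ofReal_le_ofReal ?_) _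
        rw [div_mul_eq_mul_div, le_div_iff₀ hlog2]
        nlinarith

/-- Weak-(1,1) bound for the shifted maximal function, with constant `C log(2+|t|)`,
`C` independent of `t`. -/
theorem shiftedMax_weak_l1 (φ : SchwartzMap ℝ ℝ) (hφ : ∀ x, 0 ≤ φ x) :
    ∃ C > (0 : ℝ), ∀ t : ℝ, ∀ f : ℝ → ℂ, Integrable f volume →
      ∀ l : ℝ, 0 < l →
        ENNReal.ofReal l * volume {x : ℝ | ENNReal.ofReal l < shiftedMax (⇑φ) t f x}
          ≤ ENNReal.ofReal (C * Real.log (2 + |t|)) * ∫⁻ y, (‖f y‖₊ : ℝ≥0∞) :=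
  shiftedMax_weak_l1_general φ
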